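/- arXiv:2301.07538 — 3 statements merged into one kernel-verified Lean document; each statement's English description precedes it below -/
import Mathlib

section
/- Let m be a positive integer and set ω = 2πm. Define p₀(x) = cos(ωx), q₀(x) = sin(ωx), p₁(x) = x·p₀(x) + (1/(2ω))·q₀(x), q₁(x) = x·q₀(x) + (1/(2ω))·p₀(x), and for k ≥ 1 define p_{k+1}(x) = x·p_k(x) − (⟨x·p_k, q_k⟩/⟨q_k, q_k⟩)·q_k(x) − (⟨x·p_k, p_{k−1}⟩/⟨p_{k−1}, p_{k−1}⟩)·p_{k−1}(x) and q_{k+1}(x) = x·q_k(x) − (⟨x·q_k, p_k⟩/⟨p_k, p_k⟩)·p_k(x) − (⟨x·q_k, q_{k−1}⟩/⟨q_{k−1}, q_{k−1}⟩)·q_{k−1}(x). Assume ⟨p_j, p_j⟩ ≠ 0 and ⟨q_j, q_j⟩ ≠ 0 for all j (so the recurrence coefficients are well defined). Then the family {p_j, q_j} is pairwise orthogonal: ⟨p_i, p_j⟩ = 0 for all i ≠ j, ⟨q_i, q_j⟩ = 0 for all i ≠ j, and ⟨p_i, q_j⟩ = 0 for all i, j. -/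
/-- The inner product `⟨f, g⟩ = ∫_{-1}^{1} f(x) g(x) dx`. -/
noncomputable def ip (f g : ℝ → ℝ) : ℝ := ∫ x in (-1 : ℝ)..1, f x * g x


lemma sincos (m : ℕ) (hm : 0 < m) (ω : ℝ) (hω : ω = 2 * Real.pi * m) :
    Real.sin (2*ω) = 0 ∧ Real.cos (2*ω) = 1 ∧ 0 < ω := by
  have h1 : (2:ℝ)*ω = (2*m : ℕ) * (2*Real.pi) := by push_cast [hω]; ring
  have h2 : (2:ℝ)*ω = (4*m : ℕ) * Real.pi := by push_cast [hω]; ring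
  refine ⟨by rw [h2]; exact Real.sin_nat_mul_pi _, by rw [h1]; exact Real.cos_nat_mul_two_pi _, ?_⟩
  have hm' : (1:ℝ) ≤ m := by exact_mod_cast hm
  have := Real.pi_pos
  nlinarith

lemma intJ (m : ℕ) (hm : 0 < m) (ω : ℝ) (hω : ω = 2 * Real.pi * m) :
    ∫ x in (-1:ℝ)..1, x * (Real.sin (ω*x) * Real.cos (ω*x)) = -1/(2*ω) := by
  obtain ⟨hs, hc, hω0⟩ := sincos m hm ω hω
  have hne : ω ≠ 0 := ne_of_gt hω0
  have key : ∀ x : ℝ, HasDerivAt (fun y => Real.sin (2*ω*y)/(8*ω^2) - y * Real.cos (2*ω*y)/(4*ω))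
      (x * (Real.sin (ω*x) * Real.cos (ω*x))) x := by
    intro x
    have d1 : HasDerivAt (fun y : ℝ => 2*ω*y) (2*ω) x := by
      simpa using (hasDerivAt_id x).const_mul (2*ω)
    have ds : HasDerivAt (fun y => Real.sin (2*ω*y)) (Real.cos (2*ω*x) * (2*ω)) x :=
      (Real.hasDerivAt_sin _).comp x d1
    have dc : HasDerivAt (fun y => Real.cos (2*ω*y)) (-Real.sin (2*ω*x) * (2*ω)) x :=
      (Real.hasDerivAt_cos _).comp x d1
    have dxc : HasDerivAt (fun y => y * Real.cos (2*ω*y))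
        (1 * Real.cos (2*ω*x) + x * (-Real.sin (2*ω*x) * (2*ω))) x :=
      (hasDerivAt_id x).mul dc
    have := ((ds.div_const (8*ω^2)).sub (dxc.div_const (4*ω)))
    refine this.congr_deriv (Eq.symm ?_)
    have h2 : Real.sin (2*ω*x) = 2 * Real.sin (ω*x) * Real.cos (ω*x) := by
      rw [show 2*ω*x = 2*(ω*x) by ring, Real.sin_two_mul]
    field_simp
    rw [show x * ω * 2 = 2 * ω * x by ring, h2]; ring
  rw [intervalIntegral.integral_eq_sub_of_hasDerivAt (fun x _ => key x)
    ((continuous_id.mul ((Real.continuous_sin.comp (by continuity)).mul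
      (Real.continuous_cos.comp (by continuity)))).intervalIntegrable _ _)]
  rw [show 2*ω*(-1:ℝ) = -(2*ω) by ring, show 2*ω*(1:ℝ) = 2*ω by ring]
  rw [Real.sin_neg, Real.cos_neg, hs, hc]
  field_simp; ring

lemma intK (m : ℕ) (hm : 0 < m) (ω : ℝ) (hω : ω = 2 * Real.pi * m) :
    ∫ x in (-1:ℝ)..1, Real.cos (ω*x) * Real.cos (ω*x) = 1 := by
  obtain ⟨hs, hc, hω0⟩ := sincos m hm ω hω
  have hne : ω ≠ 0 := ne_of_gt hω0
  have key : ∀ x : ℝ, HasDerivAt (fun y => y/2 + Real.sin (2*ω*y)/(4*ω))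
      (Real.cos (ω*x) * Real.cos (ω*x)) x := by
    intro x
    have d1 : HasDerivAt (fun y : ℝ => 2*ω*y) (2*ω) x := by
      simpa using (hasDerivAt_id x).const_mul (2*ω)
    have ds : HasDerivAt (fun y => Real.sin (2*ω*y)) (Real.cos (2*ω*x) * (2*ω)) x :=
      (Real.hasDerivAt_sin _).comp x d1
    have := ((hasDerivAt_id x).div_const 2).add (ds.div_const (4*ω))
    refine this.congr_deriv (Eq.symm ?_)
    have h2 : Real.cos (2*ω*x) = 2 * Real.cos (ω*x)^2 - 1 := by
      rw [show 2*ω*x = 2*(ω*x) by ring, Real.cos_two_mul]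
    rw [h2]; field_simp; ring
  rw [intervalIntegral.integral_eq_sub_of_hasDerivAt (fun x _ => key x)
    (((Real.continuous_cos.comp (by continuity)).mul
      (Real.continuous_cos.comp (by continuity))).intervalIntegrable _ _)]
  rw [show 2*ω*(-1:ℝ) = -(2*ω) by ring, show 2*ω*(1:ℝ) = 2*ω by ring]
  rw [Real.sin_neg, hs]
  norm_num

lemma intL (m : ℕ) (hm : 0 < m) (ω : ℝ) (hω : ω = 2 * Real.pi * m) :
    ∫ x in (-1:ℝ)..1, Real.sin (ω*x) * Real.sin (ω*x) = 1 := by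
  obtain ⟨hs, hc, hω0⟩ := sincos m hm ω hω
  have hne : ω ≠ 0 := ne_of_gt hω0
  have key : ∀ x : ℝ, HasDerivAt (fun y => y/2 - Real.sin (2*ω*y)/(4*ω))
      (Real.sin (ω*x) * Real.sin (ω*x)) x := by
    intro x
    have d1 : HasDerivAt (fun y : ℝ => 2*ω*y) (2*ω) x := by
      simpa using (hasDerivAt_id x).const_mul (2*ω)
    have ds : HasDerivAt (fun y => Real.sin (2*ω*y)) (Real.cos (2*ω*x) * (2*ω)) x :=
      (Real.hasDerivAt_sin _).comp x d1
    have := ((hasDerivAt_id x).div_const 2).sub (ds.div_const (4*ω))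
    refine this.congr_deriv (Eq.symm ?_)
    have h2 : Real.cos (2*ω*x) = 1 - 2 * Real.sin (ω*x)^2 := by
      rw [show 2*ω*x = 2*(ω*x) by ring, Real.cos_two_mul']
      linarith [Real.sin_sq_add_cos_sq (ω*x)]
    rw [h2]; field_simp; ring
  rw [intervalIntegral.integral_eq_sub_of_hasDerivAt (fun x _ => key x)
    (((Real.continuous_sin.comp (by continuity)).mul
      (Real.continuous_sin.comp (by continuity))).intervalIntegrable _ _)]
  rw [show 2*ω*(-1:ℝ) = -(2*ω) by ring, show 2*ω*(1:ℝ) = 2*ω by ring]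
  rw [Real.sin_neg, hs]
  norm_num



lemma ipodd (f g : ℝ → ℝ) (h : ∀ x, f (-x) * g (-x) = -(f x * g x)) : ip f g = 0 := by
  have h2 := intervalIntegral.integral_comp_neg (a := (-1:ℝ)) (b := 1) (fun x => f x * g x)
  simp only [h, neg_neg] at h2
  rw [intervalIntegral.integral_neg] at h2
  have : ip f g = ∫ x in (-1:ℝ)..1, f x * g x := rfl
  rw [this]
  linarith [h2]

lemma ip_symm (f g : ℝ → ℝ) : ip f g = ip g f := by
  unfold ip
  exact intervalIntegral.integral_congr (fun x _ => mul_comm _ _)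

lemma xswap (f g : ℝ → ℝ) : ip (fun y => y * f y) g = ip f (fun y => y * g y) := by
  unfold ip
  exact intervalIntegral.integral_congr (fun x _ => by ring)

lemma ip_comb (f g h w : ℝ → ℝ) (hf : Continuous f) (hg : Continuous g) (hh : Continuous h)
    (hw : Continuous w) (a b c : ℝ) :
    ip (fun x => a * f x + b * g x + c * h x) w = a * ip f w + b * ip g w + c * ip h w := by
  unfold ip
  have e : (fun x => (a * f x + b * g x + c * h x) * w x)
      = fun x => (a * (f x * w x) + b * (g x * w x)) + c * (h x * w x) := funext fun x => by ring
  rw [e]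
  have i1 : IntervalIntegrable (fun x => a * (f x * w x)) MeasureTheory.volume (-1) 1 :=
    (continuous_const.mul (hf.mul hw)).intervalIntegrable _ _
  have i2 : IntervalIntegrable (fun x => b * (g x * w x)) MeasureTheory.volume (-1) 1 :=
    (continuous_const.mul (hg.mul hw)).intervalIntegrable _ _
  have i3 : IntervalIntegrable (fun x => c * (h x * w x)) MeasureTheory.volume (-1) 1 :=
    (continuous_const.mul (hh.mul hw)).intervalIntegrable _ _
  rw [intervalIntegral.integral_add (i1.add i2) i3, intervalIntegral.integral_add i1 i2,
    intervalIntegral.integral_const_mul, intervalIntegral.integral_const_mul,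
    intervalIntegral.integral_const_mul]

theorem stmt_0 (m : ℕ) (hm : 0 < m) (ω : ℝ) (hω : ω = 2 * Real.pi * m)
    (p q : ℕ → ℝ → ℝ)
    (hp0 : ∀ x, p 0 x = Real.cos (ω * x))
    (hq0 : ∀ x, q 0 x = Real.sin (ω * x))
    (hp1 : ∀ x, p 1 x = x * p 0 x + (1 / (2 * ω)) * q 0 x)
    (hq1 : ∀ x, q 1 x = x * q 0 x + (1 / (2 * ω)) * p 0 x)
    (hnp : ∀ j, ip (p j) (p j) ≠ 0)
    (hnq : ∀ j, ip (q j) (q j) ≠ 0)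
    (hprec : ∀ k, 1 ≤ k → ∀ x, p (k + 1) x =
      x * p k x
        - (ip (fun y => y * p k y) (q k) / ip (q k) (q k)) * q k x
        - (ip (fun y => y * p k y) (p (k - 1)) / ip (p (k - 1)) (p (k - 1))) * p (k - 1) x)
    (hqrec : ∀ k, 1 ≤ k → ∀ x, q (k + 1) x =
      x * q k x
        - (ip (fun y => y * q k y) (p k) / ip (p k) (p k)) * p k x
        - (ip (fun y => y * q k y) (q (k - 1)) / ip (q (k - 1)) (q (k - 1))) * q (k - 1) x) :
    (∀ i j, i ≠ j → ip (p i) (p j) = 0) ∧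
    (∀ i j, i ≠ j → ip (q i) (q j) = 0) ∧
    (∀ i j, ip (p i) (q j) = 0) := by
  obtain ⟨hs2, hc2, hω0⟩ := sincos m hm ω hω
  have hωne : ω ≠ 0 := ne_of_gt hω0
  -- continuity
  have hc : ∀ k, Continuous (p k) ∧ Continuous (q k) := by
    intro k
    induction k using Nat.strong_induction_on with
    | _ k ih =>
      cases k with
      | zero =>
        constructor
        · have e : p 0 = fun x => Real.cos (ω * x) := funext hp0
          rw [e]; fun_prop
        · have e : q 0 = fun x => Real.sin (ω * x) := funext hq0
          rw [e]; fun_prop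
      | succ k =>
        cases k with
        | zero =>
          obtain ⟨c0p, c0q⟩ := ih 0 (by omega)
          constructor
          · have e : p 1 = fun x => x * p 0 x + (1 / (2 * ω)) * q 0 x := funext hp1
            rw [e]; exact (continuous_id.mul c0p).add (continuous_const.mul c0q)
          · have e : q 1 = fun x => x * q 0 x + (1 / (2 * ω)) * p 0 x := funext hq1
            rw [e]; exact (continuous_id.mul c0q).add (continuous_const.mul c0p)
        | succ k =>
          obtain ⟨ckp, ckq⟩ := ih k (by omega)
          obtain ⟨ck1p, ck1q⟩ := ih (k+1) (by omega)
          constructor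
          · have e : p (k+2) = fun x => x * p (k+1) x
                - (ip (fun y => y * p (k+1) y) (q (k+1)) / ip (q (k+1)) (q (k+1))) * q (k+1) x
                - (ip (fun y => y * p (k+1) y) (p k) / ip (p k) (p k)) * p k x := by
              funext x
              have h := hprec (k+1) (by omega) x
              simpa using h
            rw [e]
            exact ((continuous_id.mul ck1p).sub (continuous_const.mul ck1q)).sub
              (continuous_const.mul ckp)
          · have e : q (k+2) = fun x => x * q (k+1) x
                - (ip (fun y => y * q (k+1) y) (p (k+1)) / ip (p (k+1)) (p (k+1))) * p (k+1) x
                - (ip (fun y => y * q (k+1) y) (q k) / ip (q k) (q k)) * q k x := by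
              funext x
              have h := hqrec (k+1) (by omega) x
              simpa using h
            rw [e]
            exact ((continuous_id.mul ck1q).sub (continuous_const.mul ck1p)).sub
              (continuous_const.mul ckq)
  have contp : ∀ j, Continuous (p j) := fun j => (hc j).1
  have contq : ∀ j, Continuous (q j) := fun j => (hc j).2
  have contxp : ∀ j, Continuous (fun y => y * p j y) := fun j => continuous_id.mul (contp j)
  have contxq : ∀ j, Continuous (fun y => y * q j y) := fun j => continuous_id.mul (contq j)
  -- parity
  have par : ∀ k, (∀ x, p k (-x) = (-1:ℝ)^k * p k x) ∧ (∀ x, q k (-x) = -(-1:ℝ)^k * q k x) := by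
    intro k
    induction k using Nat.strong_induction_on with
    | _ k ih =>
      cases k with
      | zero =>
        constructor
        · intro x
          rw [hp0, hp0, show ω * (-x) = -(ω*x) by ring, Real.cos_neg]
          norm_num
        · intro x
          rw [hq0, hq0, show ω * (-x) = -(ω*x) by ring, Real.sin_neg]
          norm_num
      | succ k =>
        cases k with
        | zero =>
          obtain ⟨h0p, h0q⟩ := ih 0 (by omega)
          constructor
          · intro x
            rw [hp1, hp1, h0p x, h0q x]
            simp only [pow_zero, pow_one, one_mul]
            ring
          · intro x
            rw [hq1, hq1, h0p x, h0q x]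
            simp only [pow_zero, pow_one, one_mul]
            ring
        | succ k =>
          obtain ⟨hkp, hkq⟩ := ih k (by omega)
          obtain ⟨hk1p, hk1q⟩ := ih (k+1) (by omega)
          constructor
          · intro x
            have h1 := hprec (k+1) (by omega) (-x)
            have h2 := hprec (k+1) (by omega) x
            simp only [Nat.add_sub_cancel] at h1 h2
            rw [h1, h2, hk1p x, hk1q x, hkp x]
            rw [pow_succ, pow_succ]
            ring
          · intro x
            have h1 := hqrec (k+1) (by omega) (-x)
            have h2 := hqrec (k+1) (by omega) x
            simp only [Nat.add_sub_cancel] at h1 h2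
            rw [h1, h2, hk1p x, hk1q x, hkq x]
            rw [pow_succ, pow_succ]
            ring
  have hsign : ∀ k : ℕ, ((-1:ℝ)^k) * ((-1:ℝ)^k) = 1 := by
    intro k
    rw [← pow_add, ← two_mul, pow_mul]
    norm_num
  -- parity-based vanishing
  have h_pp : ∀ a b : ℕ, ((-1:ℝ)^a) = -((-1:ℝ)^b) → ip (p a) (p b) = 0 := by
    intro a b hab
    apply ipodd
    intro x
    rw [(par a).1 x, (par b).1 x, hab]
    linear_combination (-(p a x * p b x)) * hsign b
  have h_qq : ∀ a b : ℕ, ((-1:ℝ)^a) = -((-1:ℝ)^b) → ip (q a) (q b) = 0 := by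
    intro a b hab
    apply ipodd
    intro x
    rw [(par a).2 x, (par b).2 x, hab]
    linear_combination (-(q a x * q b x)) * hsign b
  have h_pq : ∀ a b : ℕ, ((-1:ℝ)^a) = ((-1:ℝ)^b) → ip (p a) (q b) = 0 := by
    intro a b hab
    apply ipodd
    intro x
    rw [(par a).1 x, (par b).2 x, hab]
    linear_combination (-(p a x * q b x)) * hsign b
  have h_xpp : ∀ a b : ℕ, ((-1:ℝ)^a) = ((-1:ℝ)^b) → ip (fun y => y * p a y) (p b) = 0 := by
    intro a b hab
    apply ipodd
    intro x
    show (-x * p a (-x)) * p b (-x) = -((x * p a x) * p b x)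
    rw [(par a).1 x, (par b).1 x, hab]
    linear_combination (-(x * p a x * p b x)) * hsign b
  have h_xqq : ∀ a b : ℕ, ((-1:ℝ)^a) = ((-1:ℝ)^b) → ip (fun y => y * q a y) (q b) = 0 := by
    intro a b hab
    apply ipodd
    intro x
    show (-x * q a (-x)) * q b (-x) = -((x * q a x) * q b x)
    rw [(par a).2 x, (par b).2 x, hab]
    linear_combination (-(x * q a x * q b x)) * hsign b
  have h_xpq : ∀ a b : ℕ, ((-1:ℝ)^a) = -((-1:ℝ)^b) → ip (fun y => y * p a y) (q b) = 0 := by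
    intro a b hab
    apply ipodd
    intro x
    show (-x * p a (-x)) * q b (-x) = -((x * p a x) * q b x)
    rw [(par a).1 x, (par b).2 x, hab]
    linear_combination (-(x * p a x * q b x)) * hsign b
  have h_xqp : ∀ a b : ℕ, ((-1:ℝ)^a) = -((-1:ℝ)^b) → ip (fun y => y * q a y) (p b) = 0 := by
    intro a b hab
    apply ipodd
    intro x
    show (-x * q a (-x)) * p b (-x) = -((x * q a x) * p b x)
    rw [(par a).2 x, (par b).1 x, hab]
    linear_combination (-(x * q a x * p b x)) * hsign b
  -- span lemmas
  have hxp : ∀ (j : ℕ) (w : ℝ → ℝ), Continuous w → (∀ i, i ≤ j + 1 → ip w (p i) = 0) →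
      (∀ i, i ≤ j → ip w (q i) = 0) → ip w (fun y => y * p j y) = 0 := by
    intro j w hw hP hQ
    rw [ip_symm]
    cases j with
    | zero =>
      have e : (fun y => y * p 0 y) = fun x => 1 * p 1 x + (-(1/(2*ω))) * q 0 x + 0 * p 0 x :=
        funext fun x => by rw [hp1 x]; ring
      rw [e, ip_comb (p 1) (q 0) (p 0) w (contp 1) (contq 0) (contp 0) hw]
      rw [ip_symm (p 1) w, ip_symm (q 0) w, hP 1 (by omega), hQ 0 (by omega)]
      ring
    | succ j =>
      have e : (fun y => y * p (j+1) y) = fun x => 1 * p (j+2) x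
          + (ip (fun y => y * p (j+1) y) (q (j+1)) / ip (q (j+1)) (q (j+1))) * q (j+1) x
          + (ip (fun y => y * p (j+1) y) (p j) / ip (p j) (p j)) * p j x := by
        funext x
        have h := hprec (j+1) (by omega) x
        simp only [Nat.add_sub_cancel] at h
        rw [h]; ring
      rw [e, ip_comb (p (j+2)) (q (j+1)) (p j) w (contp _) (contq _) (contp _) hw]
      rw [ip_symm (p (j+2)) w, ip_symm (q (j+1)) w, ip_symm (p j) w,
        hP (j+2) (by omega), hQ (j+1) (by omega), hP j (by omega)]
      ring
  have hxq : ∀ (j : ℕ) (w : ℝ → ℝ), Continuous w → (∀ i, i ≤ j + 1 → ip w (q i) = 0) →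
      (∀ i, i ≤ j → ip w (p i) = 0) → ip w (fun y => y * q j y) = 0 := by
    intro j w hw hQ hP
    rw [ip_symm]
    cases j with
    | zero =>
      have e : (fun y => y * q 0 y) = fun x => 1 * q 1 x + (-(1/(2*ω))) * p 0 x + 0 * q 0 x :=
        funext fun x => by rw [hq1 x]; ring
      rw [e, ip_comb (q 1) (p 0) (q 0) w (contq 1) (contp 0) (contq 0) hw]
      rw [ip_symm (q 1) w, ip_symm (p 0) w, hQ 1 (by omega), hP 0 (by omega)]
      ring
    | succ j =>
      have e : (fun y => y * q (j+1) y) = fun x => 1 * q (j+2) x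
          + (ip (fun y => y * q (j+1) y) (p (j+1)) / ip (p (j+1)) (p (j+1))) * p (j+1) x
          + (ip (fun y => y * q (j+1) y) (q j) / ip (q j) (q j)) * q j x := by
        funext x
        have h := hqrec (j+1) (by omega) x
        simp only [Nat.add_sub_cancel] at h
        rw [h]; ring
      rw [e, ip_comb (q (j+2)) (p (j+1)) (q j) w (contq _) (contp _) (contq _) hw]
      rw [ip_symm (q (j+2)) w, ip_symm (p (j+1)) w, ip_symm (q j) w,
        hQ (j+2) (by omega), hP (j+1) (by omega), hQ j (by omega)]
      ring
  -- base-case computations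
  have bpq01 : ip (p 0) (q 1) = 0 := by
    have e : (fun x => p 0 x * q 1 x) = fun x => x * (Real.sin (ω*x) * Real.cos (ω*x))
        + (1/(2*ω)) * (Real.cos (ω*x) * Real.cos (ω*x)) :=
      funext fun x => by rw [hq1 x, hq0 x, hp0 x]; ring
    unfold ip
    rw [e]
    have i1 : IntervalIntegrable (fun x => x * (Real.sin (ω*x) * Real.cos (ω*x)))
        MeasureTheory.volume (-1) 1 := (by fun_prop : Continuous _).intervalIntegrable _ _
    have i2 : IntervalIntegrable (fun x => (1/(2*ω)) * (Real.cos (ω*x) * Real.cos (ω*x)))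
        MeasureTheory.volume (-1) 1 := (by fun_prop : Continuous _).intervalIntegrable _ _
    rw [intervalIntegral.integral_add i1 i2, intervalIntegral.integral_const_mul,
      intJ m hm ω hω, intK m hm ω hω]
    field_simp
    ring
  have bpq10 : ip (p 1) (q 0) = 0 := by
    have e : (fun x => p 1 x * q 0 x) = fun x => x * (Real.sin (ω*x) * Real.cos (ω*x))
        + (1/(2*ω)) * (Real.sin (ω*x) * Real.sin (ω*x)) :=
      funext fun x => by rw [hp1 x, hq0 x, hp0 x]; ring
    unfold ip
    rw [e]
    have i1 : IntervalIntegrable (fun x => x * (Real.sin (ω*x) * Real.cos (ω*x)))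
        MeasureTheory.volume (-1) 1 := (by fun_prop : Continuous _).intervalIntegrable _ _
    have i2 : IntervalIntegrable (fun x => (1/(2*ω)) * (Real.sin (ω*x) * Real.sin (ω*x)))
        MeasureTheory.volume (-1) 1 := (by fun_prop : Continuous _).intervalIntegrable _ _
    rw [intervalIntegral.integral_add i1 i2, intervalIntegral.integral_const_mul,
      intJ m hm ω hω, intL m hm ω hω]
    field_simp
    ring
  -- main induction
  have main : ∀ N, (∀ i j, i ≤ N → j ≤ N → i ≠ j → ip (p i) (p j) = 0) ∧
      (∀ i j, i ≤ N → j ≤ N → i ≠ j → ip (q i) (q j) = 0) ∧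
      (∀ i j, i ≤ N → j ≤ N → ip (p i) (q j) = 0) := by
    intro N
    induction N with
    | zero =>
      refine ⟨fun i j hi hj hij => by omega, fun i j hi hj hij => by omega, fun i j hi hj => ?_⟩
      have hi0 : i = 0 := by omega
      have hj0 : j = 0 := by omega
      rw [hi0, hj0]
      exact h_pq 0 0 rfl
    | succ n ihn =>
      cases n with
      | zero =>
        refine ⟨?_, ?_, ?_⟩
        · intro i j hi hj hij
          interval_cases i <;> interval_cases j <;>
            first
              | exact absurd rfl hij
              | exact h_pp 0 1 (by norm_num)
              | exact h_pp 1 0 (by norm_num)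
        · intro i j hi hj hij
          interval_cases i <;> interval_cases j <;>
            first
              | exact absurd rfl hij
              | exact h_qq 0 1 (by norm_num)
              | exact h_qq 1 0 (by norm_num)
        · intro i j hi hj
          interval_cases i <;> interval_cases j <;>
            first
              | exact h_pq 0 0 rfl
              | exact h_pq 1 1 rfl
              | exact bpq01
              | exact bpq10
      | succ n =>
        obtain ⟨ihpp, ihqq, ihpq⟩ := ihn
        have pexp : ∀ w : ℝ → ℝ, Continuous w → ip (p (n+2)) w =
            ip (fun y => y * p (n+1) y) w
            - ip (fun y => y * p (n+1) y) (q (n+1)) / ip (q (n+1)) (q (n+1)) * ip (q (n+1)) w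
            - ip (fun y => y * p (n+1) y) (p n) / ip (p n) (p n) * ip (p n) w := by
          intro w hw
          have e : p (n+2) = fun x => 1 * (x * p (n+1) x)
              + (-(ip (fun y => y * p (n+1) y) (q (n+1)) / ip (q (n+1)) (q (n+1)))) * q (n+1) x
              + (-(ip (fun y => y * p (n+1) y) (p n) / ip (p n) (p n))) * p n x := by
            funext x
            have h := hprec (n+1) (by omega) x
            simp only [Nat.add_sub_cancel] at h
            rw [h]; ring
          rw [e]
          have h2 := ip_comb (fun y => y * p (n+1) y) (q (n+1)) (p n) w (contxp _) (contq _)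
            (contp _) hw 1
            (-(ip (fun y => y * p (n+1) y) (q (n+1)) / ip (q (n+1)) (q (n+1))))
            (-(ip (fun y => y * p (n+1) y) (p n) / ip (p n) (p n)))
          exact h2.trans (by ring)
        have qexp : ∀ w : ℝ → ℝ, Continuous w → ip (q (n+2)) w =
            ip (fun y => y * q (n+1) y) w
            - ip (fun y => y * q (n+1) y) (p (n+1)) / ip (p (n+1)) (p (n+1)) * ip (p (n+1)) w
            - ip (fun y => y * q (n+1) y) (q n) / ip (q n) (q n) * ip (q n) w := by
          intro w hw
          have e : q (n+2) = fun x => 1 * (x * q (n+1) x)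
              + (-(ip (fun y => y * q (n+1) y) (p (n+1)) / ip (p (n+1)) (p (n+1)))) * p (n+1) x
              + (-(ip (fun y => y * q (n+1) y) (q n) / ip (q n) (q n))) * q n x := by
            funext x
            have h := hqrec (n+1) (by omega) x
            simp only [Nat.add_sub_cancel] at h
            rw [h]; ring
          rw [e]
          have h2 := ip_comb (fun y => y * q (n+1) y) (p (n+1)) (q n) w (contxq _) (contp _)
            (contq _) hw 1
            (-(ip (fun y => y * q (n+1) y) (p (n+1)) / ip (p (n+1)) (p (n+1))))
            (-(ip (fun y => y * q (n+1) y) (q n) / ip (q n) (q n)))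
          exact h2.trans (by ring)
        have Xpp : ∀ j, j + 1 ≤ n → ip (fun y => y * p (n+1) y) (p j) = 0 := by
          intro j hj
          rw [xswap]
          exact hxp j (p (n+1)) (contp _)
            (fun i hi => ihpp (n+1) i le_rfl (by omega) (by omega))
            (fun i hi => ihpq (n+1) i le_rfl (by omega))
        have Xpq : ∀ j, j ≤ n → ip (fun y => y * p (n+1) y) (q j) = 0 := by
          intro j hj
          rw [xswap]
          exact hxq j (p (n+1)) (contp _)
            (fun i hi => ihpq (n+1) i le_rfl (by omega))
            (fun i hi => ihpp (n+1) i le_rfl (by omega) (by omega))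
        have Xqq : ∀ j, j + 1 ≤ n → ip (fun y => y * q (n+1) y) (q j) = 0 := by
          intro j hj
          rw [xswap]
          exact hxq j (q (n+1)) (contq _)
            (fun i hi => ihqq (n+1) i le_rfl (by omega) (by omega))
            (fun i hi => by rw [ip_symm]; exact ihpq i (n+1) (by omega) le_rfl)
        have Xqp : ∀ j, j ≤ n → ip (fun y => y * q (n+1) y) (p j) = 0 := by
          intro j hj
          rw [xswap]
          exact hxp j (q (n+1)) (contq _)
            (fun i hi => by rw [ip_symm]; exact ihpq i (n+1) (by omega) le_rfl)
            (fun i hi => ihqq (n+1) i le_rfl (by omega) (by omega))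
        have Ppp : ip (fun y => y * p (n+1) y) (p (n+1)) = 0 := h_xpp (n+1) (n+1) rfl
        have Pqq : ip (fun y => y * q (n+1) y) (q (n+1)) = 0 := h_xqq (n+1) (n+1) rfl
        have Ppq : ip (fun y => y * p (n+1) y) (q n) = 0 :=
          h_xpq (n+1) n (by rw [pow_succ]; ring)
        have Pqp : ip (fun y => y * q (n+1) y) (p n) = 0 :=
          h_xqp (n+1) n (by rw [pow_succ]; ring)
        have Ppq2 : ip (fun y => y * p (n+1) y) (q (n+2)) = 0 :=
          h_xpq (n+1) (n+2) (by rw [pow_succ (-1 : ℝ) (n+1)]; ring)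
        have N1 : ∀ j, j ≤ n+1 → ip (p (n+2)) (p j) = 0 := by
          intro j hj
          rw [pexp (p j) (contp j)]
          rcases Nat.lt_trichotomy j n with h|h|h
          · rw [Xpp j (by omega), ihpp n j (by omega) (by omega) (by omega),
              show ip (q (n+1)) (p j) = 0 from by
                rw [ip_symm]; exact ihpq j (n+1) (by omega) le_rfl]
            ring
          · rw [h]
            rw [show ip (q (n+1)) (p n) = 0 from by
                rw [ip_symm]; exact ihpq n (n+1) (by omega) le_rfl,
              div_mul_cancel₀ _ (hnp n)]
            ring
          · have h2 : j = n+1 := by omega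
            rw [h2]
            rw [Ppp,
              show ip (q (n+1)) (p (n+1)) = 0 from by
                rw [ip_symm]; exact ihpq (n+1) (n+1) le_rfl le_rfl,
              ihpp n (n+1) (by omega) le_rfl (by omega)]
            ring
        have N3 : ∀ j, j ≤ n+1 → ip (p (n+2)) (q j) = 0 := by
          intro j hj
          rw [pexp (q j) (contq j)]
          rcases Nat.lt_or_ge j (n+1) with h|h
          · rw [Xpq j (by omega), ihqq (n+1) j le_rfl (by omega) (by omega),
              ihpq n j (by omega) (by omega)]
            ring
          · have h2 : j = n+1 := by omega
            rw [h2]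
            rw [div_mul_cancel₀ _ (hnq (n+1)), ihpq n (n+1) (by omega) le_rfl]
            ring
        have N2 : ∀ j, j ≤ n+1 → ip (q (n+2)) (q j) = 0 := by
          intro j hj
          rw [qexp (q j) (contq j)]
          rcases Nat.lt_trichotomy j n with h|h|h
          · rw [Xqq j (by omega), ihpq (n+1) j le_rfl (by omega),
              ihqq n j (by omega) (by omega) (by omega)]
            ring
          · rw [h]
            rw [ihpq (n+1) n le_rfl (by omega), div_mul_cancel₀ _ (hnq n)]
            ring
          · have h2 : j = n+1 := by omega
            rw [h2]
            rw [Pqq, ihpq (n+1) (n+1) le_rfl le_rfl, ihqq n (n+1) (by omega) le_rfl (by omega)]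
            ring
        have N4 : ∀ i, i ≤ n+1 → ip (p i) (q (n+2)) = 0 := by
          intro i hi
          rw [ip_symm, qexp (p i) (contp i)]
          rcases Nat.lt_trichotomy i n with h|h|h
          · rw [Xqp i (by omega), ihpp (n+1) i le_rfl (by omega) (by omega),
              show ip (q n) (p i) = 0 from by
                rw [ip_symm]; exact ihpq i n (by omega) (by omega)]
            ring
          · rw [h]
            rw [Pqp, ihpp (n+1) n le_rfl (by omega) (by omega),
              show ip (q n) (p n) = 0 from by
                rw [ip_symm]; exact ihpq n n (by omega) (by omega)]
            ring
          · have h2 : i = n+1 := by omega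
            rw [h2]
            rw [div_mul_cancel₀ _ (hnp (n+1)),
              show ip (q n) (p (n+1)) = 0 from by
                rw [ip_symm]; exact ihpq (n+1) n le_rfl (by omega)]
            ring
        have N5 : ip (p (n+2)) (q (n+2)) = 0 := by
          rw [pexp (q (n+2)) (contq _)]
          rw [Ppq2,
            show ip (q (n+1)) (q (n+2)) = 0 from by rw [ip_symm]; exact N2 (n+1) le_rfl,
            N4 n (by omega)]
          ring
        refine ⟨?_, ?_, ?_⟩
        · intro i j hi hj hij
          by_cases hi2 : i = n+2
          · rw [hi2]; exact N1 j (by omega)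
          · by_cases hj2 : j = n+2
            · rw [hj2, ip_symm]; exact N1 i (by omega)
            · exact ihpp i j (by omega) (by omega) hij
        · intro i j hi hj hij
          by_cases hi2 : i = n+2
          · rw [hi2]; exact N2 j (by omega)
          · by_cases hj2 : j = n+2
            · rw [hj2, ip_symm]; exact N2 i (by omega)
            · exact ihqq i j (by omega) (by omega) hij
        · intro i j hi hj
          by_cases hi2 : i = n+2
          · by_cases hj2 : j = n+2
            · rw [hi2, hj2]; exact N5
            · rw [hi2]; exact N3 j (by omega)
          · by_cases hj2 : j = n+2
            · rw [hj2]; exact N4 i (by omega)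
            · exact ihpq i j (by omega) (by omega)
  exact ⟨fun i j hij => (main (max i j)).1 i j (le_max_left i j) (le_max_right i j) hij,
    fun i j hij => (main (max i j)).2.1 i j (le_max_left i j) (le_max_right i j) hij,
    fun i j => (main (max i j)).2.2 i j (le_max_left i j) (le_max_right i j)⟩
end

section
/- Let P_n denote the n-th Legendre polynomial, defined by Rodrigues' formula P_n(x) = 1/(2ⁿ·n!) · dⁿ/dxⁿ (x²−1)ⁿ. For all natural numbers j and k, the limit as ω → +∞ of ∫_{−1}^{1} P_j(x)·cos(ωx)·P_k(x)·cos(ωx) dx equals 0 if j ≠ k and equals 1/(2k+1) if j = k; the same holds for ∫_{−1}^{1} P_j(x)·sin(ωx)·P_k(x)·sin(ωx) dx. -/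
open Polynomial intervalIntegral Filter MeasureTheory

noncomputable def Q (n : ℕ) : Polynomial ℝ := ((X:Polynomial ℝ) ^ 2 - 1) ^ n

lemma Q_factor {m n : ℕ} (h : m ≤ n) :
    ∃ r : Polynomial ℝ, derivative^[m] (Q n) = Q (n - m) * r := by
  induction m with
  | zero => exact ⟨1, by simp⟩
  | succ m ih =>
    obtain ⟨r, hr⟩ := ih (Nat.le_of_succ_le h)
    have hnm : n - m = (n - (m+1)) + 1 := by omega
    refine ⟨C (((n - (m+1)) + 1 : ℕ) : ℝ) * derivative ((X:Polynomial ℝ)^2 - 1) * r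
        + ((X:Polynomial ℝ)^2 - 1) * derivative r, ?_⟩
    rw [Function.iterate_succ_apply', hr]
    unfold Q
    rw [hnm, derivative_mul, derivative_pow, Nat.add_sub_cancel]
    ring

lemma Q_eval_one {n : ℕ} (h : 1 ≤ n) : (Q n).eval 1 = 0 := by
  unfold Q; simp [zero_pow (by omega : n ≠ 0)]

lemma Q_eval_negone {n : ℕ} (h : 1 ≤ n) : (Q n).eval (-1) = 0 := by
  unfold Q; simp [zero_pow (by omega : n ≠ 0)]

lemma iter_eval_one {m n : ℕ} (h : m < n) : (derivative^[m] (Q n)).eval 1 = 0 := by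
  obtain ⟨r, hr⟩ := Q_factor (le_of_lt h)
  rw [hr, eval_mul, Q_eval_one (by omega), zero_mul]

lemma iter_eval_negone {m n : ℕ} (h : m < n) : (derivative^[m] (Q n)).eval (-1) = 0 := by
  obtain ⟨r, hr⟩ := Q_factor (le_of_lt h)
  rw [hr, eval_mul, Q_eval_negone (by omega), zero_mul]

/-- FTC for polynomials. -/
lemma poly_ftc (p : Polynomial ℝ) :
    ∫ x in (-1:ℝ)..1, (derivative p).eval x = p.eval 1 - p.eval (-1) := by
  apply integral_eq_sub_of_hasDerivAt (fun x _ => p.hasDerivAt x)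
  exact (Polynomial.continuous _).intervalIntegrable _ _

/-- Integration by parts for polynomials. -/
lemma poly_parts (p q : Polynomial ℝ) :
    ∫ x in (-1:ℝ)..1, p.eval x * (derivative q).eval x
      = p.eval 1 * q.eval 1 - p.eval (-1) * q.eval (-1)
        - ∫ x in (-1:ℝ)..1, (derivative p).eval x * q.eval x := by
  apply intervalIntegral.integral_mul_deriv_eq_deriv_mul (fun x _ => p.hasDerivAt x) (fun x _ => q.hasDerivAt x)
  · exact (Polynomial.continuous _).intervalIntegrable _ _
  · exact (Polynomial.continuous _).intervalIntegrable _ _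

lemma repeated_parts {n N : ℕ} (h : n ≤ N) (p : Polynomial ℝ) :
    ∫ x in (-1:ℝ)..1, p.eval x * (derivative^[n] (Q N)).eval x
      = (-1)^n * ∫ x in (-1:ℝ)..1, (derivative^[n] p).eval x * (Q N).eval x := by
  induction n generalizing p with
  | zero => simp
  | succ n ih =>
    have h1 : (derivative^[n] (Q N)).eval 1 = 0 := iter_eval_one (by omega)
    have h2 : (derivative^[n] (Q N)).eval (-1) = 0 := iter_eval_negone (by omega)
    rw [Function.iterate_succ_apply', poly_parts, h1, h2,
      ih (by omega) (derivative p), ← Function.iterate_succ_apply]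
    ring

noncomputable def J (k : ℕ) : ℝ := ∫ x in (-1:ℝ)..1, (1 - x^2)^k

lemma J_int (k : ℕ) : IntervalIntegrable (fun x : ℝ => (1 - x^2)^k) volume (-1) 1 := by
  apply Continuous.intervalIntegrable; continuity

lemma J_succ (k : ℕ) : (2*(k:ℝ)+3) * J (k+1) = (2*(k:ℝ)+2) * J k := by
  have key : ∀ x : ℝ, HasDerivAt (fun x : ℝ => x * (1 - x^2)^(k+1))
      ((2*(k:ℝ)+3) * (1 - x^2)^(k+1) - (2*(k:ℝ)+2) * (1 - x^2)^k) x := by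
    intro x
    have hg : HasDerivAt (fun x : ℝ => 1 - x^2) (-(2*x)) x := by
      simpa using ((hasDerivAt_pow 2 x).const_sub 1)
    have := (hasDerivAt_id x).mul (hg.pow (k+1))
    refine this.congr_deriv ?_
    simp only [Pi.pow_apply, id_eq, Nat.add_sub_cancel]
    push_cast
    ring
  have ftc : ∫ x in (-1:ℝ)..1, ((2*(k:ℝ)+3) * (1 - x^2)^(k+1) - (2*(k:ℝ)+2) * (1 - x^2)^k)
      = 0 := by
    rw [integral_eq_sub_of_hasDerivAt (fun x _ => key x)
      (by apply Continuous.intervalIntegrable; continuity)]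
    norm_num
  rw [intervalIntegral.integral_sub ((J_int (k+1)).const_mul _) ((J_int k).const_mul _),
    intervalIntegral.integral_const_mul, intervalIntegral.integral_const_mul] at ftc
  unfold J
  linarith

lemma J_formula (k : ℕ) :
    J k = 2^(2*k+1) * ((k.factorial : ℝ))^2 / ((2*k+1).factorial : ℝ) := by
  induction k with
  | zero =>
    unfold J
    norm_num
  | succ k ih =>
    have h := J_succ k
    have h3 : (2*(k:ℝ)+3) ≠ 0 := by positivity
    have e1 : ((2*(k+1)+1).factorial : ℝ) = (2*(k:ℝ)+3) * (2*(k:ℝ)+2) * ((2*k+1).factorial : ℝ) := by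
      have : 2*(k+1)+1 = (2*k+1) + 1 + 1 := by ring
      rw [this, Nat.factorial_succ, Nat.factorial_succ]
      push_cast
      ring
    have e2 : (((k+1).factorial : ℝ)) = ((k:ℝ)+1) * (k.factorial : ℝ) := by
      rw [Nat.factorial_succ]; push_cast; ring
    have hf : ((2*k+1).factorial : ℝ) ≠ 0 := Nat.cast_ne_zero.mpr (Nat.factorial_ne_zero _)
    have : J (k+1) = (2*(k:ℝ)+2)/(2*(k:ℝ)+3) * J k := by
      field_simp
      linarith [h]
    rw [this, ih, e1, e2]
    have h2 : (2:ℝ)^(2*(k+1)+1) = 4 * 2^(2*k+1) := by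
      have : 2*(k+1)+1 = (2*k+1) + 2 := by ring
      rw [this, pow_add]; ring
    rw [h2]
    field_simp
    ring

/-- The `n`-th Legendre polynomial, via Rodrigues' formula
`P_n(x) = 1/(2^n n!) · dⁿ/dxⁿ (x² − 1)ⁿ`. -/
noncomputable def legendreP (n : ℕ) : Polynomial ℝ :=
  (1 / (2 ^ n * n.factorial) : ℝ) •
    (Polynomial.derivative^[n] ((Polynomial.X ^ 2 - 1) ^ n))

lemma legendreP_eq (n : ℕ) :
    legendreP n = (1 / (2 ^ n * n.factorial) : ℝ) • (derivative^[n] (Q n)) := rfl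

lemma int_Q (k : ℕ) : ∫ x in (-1:ℝ)..1, (Q k).eval x = (-1:ℝ)^k * J k := by
  unfold Q J
  rw [← intervalIntegral.integral_const_mul]
  congr 1
  ext x
  simp only [eval_pow, eval_sub, eval_one, eval_X]
  rw [← mul_pow]
  ring_nf

lemma legendre_natDegree_le (n : ℕ) : (legendreP n).natDegree ≤ n := by
  rw [legendreP_eq]
  refine (natDegree_smul_le _ _).trans ((natDegree_iterate_derivative _ _).trans ?_)
  have hm : ((X:Polynomial ℝ)^2 - 1).Monic := by
    have := monic_X_pow_sub_C (1:ℝ) (two_ne_zero)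
    simpa using this
  have hd : ((X:Polynomial ℝ)^2 - 1).natDegree = 2 := by
    simpa using natDegree_X_pow_sub_C (n := 2) (r := (1:ℝ))
  have : (Q n).natDegree = n * 2 := by
    unfold Q
    rw [hm.natDegree_pow, hd]
  rw [this]
  omega

lemma orth_zero (k : ℕ) (p : Polynomial ℝ) (hp : derivative^[k] p = 0) :
    ∫ x in (-1:ℝ)..1, p.eval x * (legendreP k).eval x = 0 := by
  have : ∀ x : ℝ, p.eval x * (legendreP k).eval x
      = (1 / (2 ^ k * k.factorial) : ℝ) * (p.eval x * (derivative^[k] (Q k)).eval x) := by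
    intro x
    rw [legendreP_eq, eval_smul, smul_eq_mul]
    ring
  simp_rw [this]
  rw [intervalIntegral.integral_const_mul, repeated_parts le_rfl, hp]
  simp

lemma orth_lt {j k : ℕ} (h : j < k) :
    ∫ x in (-1:ℝ)..1, (legendreP j).eval x * (legendreP k).eval x = 0 :=
  orth_zero k _ (iterate_derivative_eq_zero (lt_of_le_of_lt (legendre_natDegree_le j) h))

lemma legendre_coeff (k : ℕ) :
    (legendreP k).coeff k = ((2*k).factorial : ℝ) / (2^k * ((k.factorial : ℝ))^2) := by
  have hm : ((X:Polynomial ℝ)^2 - 1).Monic := by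
    have := monic_X_pow_sub_C (1:ℝ) (two_ne_zero)
    simpa using this
  have hd : ((X:Polynomial ℝ)^2 - 1).natDegree = 2 := by
    simpa using natDegree_X_pow_sub_C (n := 2) (r := (1:ℝ))
  have hQd : (Q k).natDegree = k + k := by
    unfold Q; rw [hm.natDegree_pow, hd]; ring
  have hc1 : (Q k).coeff (k + k) = 1 := by
    rw [← hQd]; exact (hm.pow k).coeff_natDegree
  have hdesc : ((2*k).descFactorial k : ℝ) * (k.factorial : ℝ) = ((2*k).factorial : ℝ) := by
    have h := Nat.factorial_mul_descFactorial (n := 2*k) (k := k) (by omega)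
    have h2 : 2*k - k = k := by omega
    rw [h2] at h
    exact_mod_cast by rw [mul_comm]; exact_mod_cast congrArg (Nat.cast (R := ℝ)) h
  rw [legendreP_eq, coeff_smul, coeff_iterate_derivative, hc1]
  have h2k : k + k = 2 * k := by ring
  rw [h2k, nsmul_eq_mul, mul_one]
  have hk : (k.factorial : ℝ) ≠ 0 := Nat.cast_ne_zero.mpr (Nat.factorial_ne_zero _)
  have h2 : (2:ℝ)^k ≠ 0 := by positivity
  rw [← hdesc]
  field_simp
  rw [smul_eq_mul]
  field_simp

lemma int_xk (k : ℕ) :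
    ∫ x in (-1:ℝ)..1, x^k * (legendreP k).eval x = J k / 2^k := by
  have : ∀ x : ℝ, x^k * (legendreP k).eval x
      = (1 / (2 ^ k * k.factorial) : ℝ)
        * (((X:Polynomial ℝ)^k).eval x * (derivative^[k] (Q k)).eval x) := by
    intro x
    rw [legendreP_eq, eval_smul, smul_eq_mul, eval_pow, eval_X]
    ring
  simp_rw [this]
  rw [intervalIntegral.integral_const_mul, repeated_parts le_rfl]
  have hD : derivative^[k] ((X:Polynomial ℝ)^k) = C ((k.factorial : ℝ)) := by
    rw [iterate_derivative_X_pow_eq_C_mul]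
    simp [Nat.descFactorial_self]
  rw [hD]
  simp_rw [eval_C]
  rw [intervalIntegral.integral_const_mul, int_Q]
  have hk : (k.factorial : ℝ) ≠ 0 := Nat.cast_ne_zero.mpr (Nat.factorial_ne_zero _)
  have h2 : (2:ℝ)^k ≠ 0 := by positivity
  have hs : ((-1:ℝ)^k) * ((-1:ℝ)^k) = 1 := by
    rw [← pow_add]
    have h2k : k + k = 2 * k := by ring
    rw [h2k, pow_mul]
    norm_num
  field_simp
  rw [sq, hs, one_mul]

lemma legendre_intble (p : Polynomial ℝ) (a b : ℝ) :
    IntervalIntegrable (fun x => p.eval x) volume a b :=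
  (Polynomial.continuous p).intervalIntegrable _ _

lemma orth_diag (k : ℕ) :
    ∫ x in (-1:ℝ)..1, (legendreP k).eval x * (legendreP k).eval x = 2/(2*(k:ℝ)+1) := by
  set c : ℝ := (legendreP k).coeff k with hc
  set r : Polynomial ℝ := legendreP k - C c * X^k with hrdef
  have hDr : derivative^[k] r = 0 := by
    by_cases hr0 : r = 0
    · simp [hr0]
    · apply iterate_derivative_eq_zero
      rw [Polynomial.natDegree_lt_iff_degree_lt hr0, Polynomial.degree_lt_iff_coeff_zero]
      intro m hm
      have hkm : k ≤ m := by exact_mod_cast hm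
      rw [hrdef, coeff_sub, coeff_C_mul, coeff_X_pow]
      rcases eq_or_lt_of_le hkm with h | h
      · simp [← h, hc]
      · rw [coeff_eq_zero_of_natDegree_lt (lt_of_le_of_lt (legendre_natDegree_le k) h)]
        simp [Nat.ne_of_gt h]
  have heval : ∀ x : ℝ, (legendreP k).eval x = c * x^k + r.eval x := by
    intro x
    rw [hrdef]
    simp only [eval_sub, eval_mul, eval_C, eval_pow, eval_X]
    ring
  have hfun : (fun x : ℝ => (legendreP k).eval x * (legendreP k).eval x)
      = fun x : ℝ => c * (x^k * (legendreP k).eval x) + r.eval x * (legendreP k).eval x := by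
    funext x
    rw [heval x]
    ring
  have hsplit : ∫ x in (-1:ℝ)..1, (legendreP k).eval x * (legendreP k).eval x
      = c * ∫ x in (-1:ℝ)..1, x^k * (legendreP k).eval x := by
    rw [hfun, intervalIntegral.integral_add, intervalIntegral.integral_const_mul]
    · have h0 : ∫ x in (-1:ℝ)..1, r.eval x * (legendreP k).eval x = 0 := orth_zero k r hDr
      rw [h0, add_zero]
    · apply Continuous.intervalIntegrable
      exact continuous_const.mul ((continuous_pow k).mul (Polynomial.continuous _))
    · exact ((Polynomial.continuous r).mul (Polynomial.continuous _)).intervalIntegrable _ _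
  rw [hsplit, int_xk, hc, legendre_coeff, J_formula]
  have hk : (k.factorial : ℝ) ≠ 0 := Nat.cast_ne_zero.mpr (Nat.factorial_ne_zero _)
  have h2 : (2:ℝ)^k ≠ 0 := by positivity
  have hf : ((2*k+1).factorial : ℝ) = (2*(k:ℝ)+1) * ((2*k).factorial : ℝ) := by
    rw [Nat.factorial_succ]; push_cast; ring
  have hf2 : ((2*k).factorial : ℝ) ≠ 0 := Nat.cast_ne_zero.mpr (Nat.factorial_ne_zero _)
  have hk1 : (2*(k:ℝ)+1) ≠ 0 := by positivity
  rw [hf]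
  have h4 : (2:ℝ)^(2*k+1) = 2 * (2^k * 2^k) := by
    rw [pow_add, two_mul, pow_add]; ring
  rw [h4]
  field_simp

lemma legendre_orthogonality (j k : ℕ) :
    ∫ x in (-1:ℝ)..1, (legendreP j).eval x * (legendreP k).eval x
      = if j = k then 2/(2*(k:ℝ)+1) else 0 := by
  rcases lt_trichotomy j k with h | h | h
  · rw [if_neg (Nat.ne_of_lt h)]
    exact orth_lt h
  · rw [if_pos h, h]
    exact orth_diag k
  · rw [if_neg (Nat.ne_of_lt' h)]
    have := orth_lt h
    rw [← this]
    apply intervalIntegral.integral_congr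
    intro x _
    ring


lemma RL (p : Polynomial ℝ) :
    Tendsto (fun ω : ℝ => ∫ x in (-1:ℝ)..1, p.eval x * Real.cos (ω*x)) atTop (nhds 0) := by
  obtain ⟨M, hM⟩ := (isCompact_Icc (a := (-1:ℝ)) (b := 1)).exists_bound_of_continuousOn
    ((Polynomial.continuous (derivative p)).continuousOn)
  have hM0 : 0 ≤ M := le_trans (norm_nonneg _) (hM 0 (by norm_num))
  set C : ℝ := |p.eval 1| + |p.eval (-1)| + 2 * M with hC
  apply squeeze_zero_norm' (a := fun ω => C / ω)
  · filter_upwards [eventually_ge_atTop (1:ℝ)] with ω hω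
    have hω0 : (0:ℝ) < ω := by linarith
    have hv : ∀ x : ℝ, HasDerivAt (fun x => Real.sin (ω*x)/ω) (Real.cos (ω*x)) x := by
      intro x
      have h1 : HasDerivAt (fun x : ℝ => ω*x) ω x := by
        simpa using (hasDerivAt_id x).const_mul ω
      have h2 := h1.sin.div_const ω
      simpa [mul_div_cancel_right₀ _ (ne_of_gt hω0)] using h2
    have hparts := integral_mul_deriv_eq_deriv_mul
      (u := fun x => p.eval x) (u' := fun x => (derivative p).eval x)
      (v := fun x => Real.sin (ω*x)/ω) (v' := fun x => Real.cos (ω*x))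
      (a := (-1:ℝ)) (b := 1)
      (fun x _ => p.hasDerivAt x) (fun x _ => hv x)
      ((Polynomial.continuous _).intervalIntegrable _ _)
      (by apply Continuous.intervalIntegrable; continuity)
    rw [hparts]
    have habs : ∀ c : ℝ, ‖p.eval c * (Real.sin (ω*c)/ω)‖ ≤ |p.eval c|/ω := by
      intro c
      rw [Real.norm_eq_abs, abs_mul, abs_div, abs_of_pos hω0]
      calc |p.eval c| * (|Real.sin (ω*c)|/ω) ≤ |p.eval c| * (1/ω) := by
            gcongr
            exact Real.abs_sin_le_one _
        _ = |p.eval c|/ω := by ring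
    have hbound : ‖∫ x in (-1:ℝ)..1, (derivative p).eval x * (Real.sin (ω*x)/ω)‖
        ≤ M / ω * |(1:ℝ) - (-1)| := by
      apply intervalIntegral.norm_integral_le_of_norm_le_const
      intro x hx
      have hx' : x ∈ Set.Icc (-1:ℝ) 1 := by
        have h := Set.uIoc_subset_uIcc hx
        rwa [Set.uIcc_of_le (by norm_num : (-1:ℝ) ≤ 1)] at h
      rw [norm_mul, norm_div, Real.norm_eq_abs ω, abs_of_pos hω0]
      calc ‖(derivative p).eval x‖ * (‖Real.sin (ω*x)‖/ω) ≤ M * (1/ω) := by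
            gcongr
            · exact hM x hx'
            · exact Real.abs_sin_le_one _
        _ = M / ω := by ring
    have h1 := habs 1
    have h2 := habs (-1)
    calc ‖p.eval 1 * (Real.sin (ω*1)/ω) - p.eval (-1) * (Real.sin (ω*(-1))/ω)
          - ∫ x in (-1:ℝ)..1, (derivative p).eval x * (Real.sin (ω*x)/ω)‖
        ≤ ‖p.eval 1 * (Real.sin (ω*1)/ω) - p.eval (-1) * (Real.sin (ω*(-1))/ω)‖
          + ‖∫ x in (-1:ℝ)..1, (derivative p).eval x * (Real.sin (ω*x)/ω)‖ := norm_sub_le _ _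
      _ ≤ ‖p.eval 1 * (Real.sin (ω*1)/ω)‖ + ‖p.eval (-1) * (Real.sin (ω*(-1))/ω)‖
          + ‖∫ x in (-1:ℝ)..1, (derivative p).eval x * (Real.sin (ω*x)/ω)‖ := by
            gcongr
            exact norm_sub_le _ _
      _ ≤ |p.eval 1|/ω + |p.eval (-1)|/ω + M / ω * |(1:ℝ) - (-1)| := by
            gcongr
      _ = C / ω := by
            rw [hC]
            rw [show |(1:ℝ) - (-1)| = 2 by norm_num]
            ring
  · exact tendsto_const_nhds.div_atTop tendsto_id

theorem stmt_9 (j k : ℕ) :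
    Filter.Tendsto
      (fun ω : ℝ => ∫ x in (-1 : ℝ)..1,
        (legendreP j).eval x * Real.cos (ω * x) * ((legendreP k).eval x * Real.cos (ω * x)))
      Filter.atTop (nhds (if j = k then 1 / (2 * (k : ℝ) + 1) else 0)) ∧
    Filter.Tendsto
      (fun ω : ℝ => ∫ x in (-1 : ℝ)..1,
        (legendreP j).eval x * Real.sin (ω * x) * ((legendreP k).eval x * Real.sin (ω * x)))
      Filter.atTop (nhds (if j = k then 1 / (2 * (k : ℝ) + 1) else 0)) := by
  set e : Polynomial ℝ := legendreP j * legendreP k with he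
  set I : ℝ := ∫ x in (-1:ℝ)..1, e.eval x with hIdef
  have hI : I = if j = k then 2/(2*(k:ℝ)+1) else 0 := by
    rw [hIdef, ← legendre_orthogonality j k]
    apply intervalIntegral.integral_congr
    intro x _
    simp [he, eval_mul]
  have hG : Tendsto (fun ω : ℝ => ∫ x in (-1:ℝ)..1, e.eval x * Real.cos ((2*ω)*x))
      atTop (nhds 0) := by
    have h2 : Tendsto (fun ω : ℝ => 2*ω) atTop atTop :=
      Tendsto.const_mul_atTop two_pos tendsto_id
    exact (RL e).comp h2
  have hlim : (if j = k then 1 / (2 * (k : ℝ) + 1) else 0) = I * (1/2) + 0 * (1/2) := by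
    rw [hI]
    split_ifs <;> ring
  have hecont : Continuous fun x : ℝ => e.eval x := Polynomial.continuous e
  have hint1 : ∀ c : ℝ, IntervalIntegrable (fun x => e.eval x * (1/2)) volume (-1) 1 :=
    fun c => (hecont.mul continuous_const).intervalIntegrable _ _
  have hint2 : ∀ ω : ℝ, IntervalIntegrable
      (fun x => e.eval x * Real.cos ((2*ω)*x) * (1/2)) volume (-1) 1 := by
    intro ω
    apply Continuous.intervalIntegrable
    exact (hecont.mul (Real.continuous_cos.comp (continuous_const.mul continuous_id))).mul
      continuous_const
  constructor
  · have hcos : ∀ ω : ℝ,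
        (∫ x in (-1:ℝ)..1,
          (legendreP j).eval x * Real.cos (ω * x) * ((legendreP k).eval x * Real.cos (ω * x)))
        = I * (1/2) + (∫ x in (-1:ℝ)..1, e.eval x * Real.cos ((2*ω)*x)) * (1/2) := by
      intro ω
      have hfun : (fun x : ℝ =>
          (legendreP j).eval x * Real.cos (ω * x) * ((legendreP k).eval x * Real.cos (ω * x)))
          = fun x : ℝ => e.eval x * (1/2) + e.eval x * Real.cos ((2*ω)*x) * (1/2) := by
        funext x
        have hc : Real.cos (ω*x) ^ 2 = 1/2 + Real.cos ((2*ω)*x)/2 := by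
          rw [Real.cos_sq]
          ring_nf
        rw [he, eval_mul]
        linear_combination ((legendreP j).eval x * (legendreP k).eval x) * hc
      rw [hfun, intervalIntegral.integral_add (hint1 0) (hint2 ω),
        intervalIntegral.integral_mul_const, intervalIntegral.integral_mul_const, hIdef]
    simp_rw [hcos, hlim]
    exact tendsto_const_nhds.add (hG.mul_const (1/2))
  · have hsin : ∀ ω : ℝ,
        (∫ x in (-1:ℝ)..1,
          (legendreP j).eval x * Real.sin (ω * x) * ((legendreP k).eval x * Real.sin (ω * x)))
        = I * (1/2) - (∫ x in (-1:ℝ)..1, e.eval x * Real.cos ((2*ω)*x)) * (1/2) := by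
      intro ω
      have hfun : (fun x : ℝ =>
          (legendreP j).eval x * Real.sin (ω * x) * ((legendreP k).eval x * Real.sin (ω * x)))
          = fun x : ℝ => e.eval x * (1/2) - e.eval x * Real.cos ((2*ω)*x) * (1/2) := by
        funext x
        have hc : Real.sin (ω*x) ^ 2 = 1/2 - Real.cos ((2*ω)*x)/2 := by
          rw [Real.sin_sq_eq_half_sub]
          ring_nf
        rw [he, eval_mul]
        linear_combination ((legendreP j).eval x * (legendreP k).eval x) * hc
      rw [hfun, intervalIntegral.integral_sub (hint1 0) (hint2 ω),
        intervalIntegral.integral_mul_const, intervalIntegral.integral_mul_const, hIdef]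
    have hlim2 : (if j = k then 1 / (2 * (k : ℝ) + 1) else 0) = I * (1/2) - 0 * (1/2) := by
      rw [hI]
      split_ifs <;> ring
    simp_rw [hsin, hlim2]
    exact tendsto_const_nhds.sub (hG.mul_const (1/2))
end

section
/- Let P_n denote the n-th Legendre polynomial, defined by Rodrigues' formula P_n(x) = 1/(2ⁿ·n!) · dⁿ/dxⁿ (x²−1)ⁿ. For every nonzero real ω and all natural numbers j and k, ∫_{−1}^{1} P_j(x)·P_k(x)·cos(2ωx) dx = (1 + (−1)^{j+k})·sin(2ω)/(2ω) − (1/(2ω))·[ Σ_{l=0}^{⌊(j−1)/2⌋} (2(j−1−2l)+1)·∫_{−1}^{1} P_{j−1−2l}(x)·P_k(x)·sin(2ωx) dx + Σ_{l=0}^{⌊(k−1)/2⌋} (2(k−1−2l)+1)·∫_{−1}^{1} P_j(x)·P_{k−1−2l}(x)·sin(2ωx) dx ], where an empty sum (when j = 0 or k = 0 respectively) is zero. -/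
open Polynomial

lemma legendre_zero : legendreP 0 = 1 := by simp [legendreP]

lemma legendre_one : legendreP 1 = X := by
  simp [legendreP]
  rw [show ((1 + 1 : Polynomial ℝ) * X) = (2:ℝ) • X by rw [Polynomial.smul_eq_C_mul]; norm_num; exact (map_ofNat C 2).symm, smul_smul]
  norm_num

-- D^{k+1}(X * p) = X * D^{k+1} p + (k+1) • D^k p
lemma itX (k : ℕ) (p : Polynomial ℝ) :
    derivative^[k+1] (X * p) =
      X * derivative^[k+1] p + (k+1) • derivative^[k] p := by
  induction k with
  | zero => simp [derivative_mul, add_comm]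
  | succ k ih =>
    rw [show k+1+1 = (k+1)+1 from rfl]
    rw [Function.iterate_succ_apply', ih]
    simp only [Function.iterate_succ_apply' derivative (k+1), derivative_add,
      derivative_mul, derivative_X, one_mul, derivative_smul]
    rw [← Function.iterate_succ_apply' derivative k]
    module

-- D^{k+2}((X²-1) p) = (X²-1) D^{k+2} p + (2(k+2)) • (X * D^{k+1} p) + ((k+2)(k+1)) • D^k p
lemma itQ (k : ℕ) (p : Polynomial ℝ) :
    derivative^[k+2] ((X^2-1) * p) =
      (X^2-1) * derivative^[k+2] p + (2*(k+2)) • (X * derivative^[k+1] p)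
        + ((k+2)*(k+1)) • derivative^[k] p := by
  induction k with
  | zero =>
    simp only [Function.iterate_succ_apply', Function.iterate_zero, id_eq]
    simp only [derivative_mul, derivative_add, derivative_sub, derivative_pow,
      derivative_X, derivative_one, derivative_smul]
    simp only [nsmul_eq_mul, C_eq_natCast, map_ofNat, derivative_C, map_one, derivative_zero, derivative_ofNat, derivative_natCast]
    push_cast
    ring
  | succ k ih =>
    rw [show k+1+2 = (k+2)+1 from rfl, Function.iterate_succ_apply', ih]
    simp only [Function.iterate_succ_apply']
    generalize derivative^[k] p = q
    simp only [derivative_mul, derivative_add, derivative_sub, derivative_pow,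
      derivative_X, derivative_one, derivative_smul]
    simp only [nsmul_eq_mul, C_eq_natCast, map_ofNat, derivative_C, map_one, derivative_zero, derivative_ofNat, derivative_natCast]
    push_cast
    ring

lemma deriv_u (n : ℕ) :
    derivative (((X:Polynomial ℝ)^2-1)^(n+1)) = (2*(n+1)) • (X * ((X^2-1)^n)) := by
  rw [derivative_pow]
  simp only [derivative_sub, derivative_pow, derivative_X, derivative_one,
    nsmul_eq_mul, C_eq_natCast, map_ofNat, derivative_C, map_one, derivative_zero, derivative_ofNat, derivative_natCast]
  rw [show n+1-1 = n from rfl]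
  push_cast
  ring

lemma lemA (m : ℕ) :
    derivative (legendreP (m+1)) =
      X * derivative (legendreP m) + ((m:ℝ)+1) • legendreP m := by
  unfold legendreP
  rw [derivative_smul, derivative_smul,
    ← Function.iterate_succ_apply' derivative (m+1),
    ← Function.iterate_succ_apply' derivative m]
  simp only [Nat.succ_eq_add_one]
  rw [show m+1+1 = (m+1)+1 from rfl, Function.iterate_succ_apply, deriv_u,
    Polynomial.iterate_derivative_smul, itX]
  have hf : (m.factorial : ℝ) ≠ 0 := Nat.cast_ne_zero.mpr m.factorial_ne_zero
  have hf1 : ((m+1).factorial : ℝ) ≠ 0 := Nat.cast_ne_zero.mpr (m+1).factorial_ne_zero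
  simp only [← Nat.cast_smul_eq_nsmul ℝ, mul_smul_comm]
  match_scalars <;>
  · push_cast [Nat.factorial_succ]
    field_simp
    ring

lemma rawC (r : ℕ) :
    derivative^[r+2] (((X:Polynomial ℝ)^2-1)^(r+2)) =
      2 • ((X^2-1) * derivative^[r+2] ((X^2-1)^(r+1)))
        + (2*(r+2)) • (X * derivative^[r+1] ((X^2-1)^(r+1))) := by
  have hi : derivative^[r+2] (((X:Polynomial ℝ)^2-1)^(r+2)) =
      (2*(r+2)) • (X * derivative^[r+1] ((X^2-1)^(r+1))
        + (r+1) • derivative^[r] ((X^2-1)^(r+1))) := by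
    rw [show r+2 = (r+1)+1 from rfl, Function.iterate_succ_apply, deriv_u (r+1),
      Polynomial.iterate_derivative_smul, itX r]
  have hii : derivative^[r+2] (((X:Polynomial ℝ)^2-1)^(r+2)) =
      (X^2-1) * derivative^[r+2] ((X^2-1)^(r+1))
        + (2*(r+2)) • (X * derivative^[r+1] ((X^2-1)^(r+1)))
        + ((r+2)*(r+1)) • derivative^[r] ((X^2-1)^(r+1)) := by
    rw [show (((X:Polynomial ℝ)^2-1))^(r+2) = (X^2-1) * (X^2-1)^(r+1) from by ring, itQ r]
  simp only [nsmul_eq_mul, smul_add, Nat.cast_ofNat] at hi hii ⊢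
  push_cast at hi hii ⊢
  linear_combination 2 * hii - hi

lemma lemC (n : ℕ) :
    (X^2-1) * derivative (legendreP n) =
      ((n:ℝ)+1) • (legendreP (n+1) - X * legendreP n) := by
  cases n with
  | zero => simp [legendre_zero, legendre_one]
  | succ r =>
    unfold legendreP
    rw [derivative_smul, ← Function.iterate_succ_apply' derivative (r+1)]
    simp only [Nat.succ_eq_add_one]
    rw [show r+1+1 = r+2 from rfl, rawC r]
    have hf : ((r+1).factorial : ℝ) ≠ 0 := Nat.cast_ne_zero.mpr (r+1).factorial_ne_zero
    have hf1 : ((r+2).factorial : ℝ) ≠ 0 := Nat.cast_ne_zero.mpr (r+2).factorial_ne_zero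
    simp only [← Nat.cast_smul_eq_nsmul ℝ, mul_smul_comm, smul_sub, smul_add, smul_smul]
    match_scalars <;>
    · push_cast [Nat.factorial_succ]
      field_simp
      ring

lemma lemB (n : ℕ) :
    X * derivative (legendreP (n+1)) =
      derivative (legendreP n) + ((n:ℝ)+1) • legendreP (n+1) := by
  rw [lemA n]
  have hc := lemC n
  simp only [Polynomial.smul_eq_C_mul] at hc ⊢
  linear_combination hc

lemma recur (n : ℕ) :
    derivative (legendreP (n+2)) =
      ((2*(n:ℝ)+3)) • legendreP (n+1) + derivative (legendreP n) := by
  rw [show n+2 = (n+1)+1 from rfl, lemA (n+1), lemB n]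
  push_cast
  module

lemma Dsum (n : ℕ) :
    derivative (legendreP n) =
      ∑ l ∈ Finset.range ((n+1)/2),
        ((2*(n-1-2*l)+1 : ℕ):ℝ) • legendreP (n-1-2*l) := by
  induction n using Nat.twoStepInduction with
  | zero => simp [legendre_zero]
  | one => simp [legendre_one, legendre_zero]
  | more n ih _ =>
    rw [recur n, ih, show (n+2+1)/2 = (n+1)/2 + 1 from by omega, Finset.sum_range_succ']
    rw [add_comm]
    congr 1
    · refine Finset.sum_congr rfl fun l _ => ?_
      have h1 : n+2-1-2*(l+1) = n-1-2*l := by omega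
      rw [h1]
    · have h2 : n+2-1-2*0 = n+1 := by omega
      rw [h2]
      push_cast
      ring_nf

lemma eval_one (n : ℕ) : (legendreP n).eval 1 = 1 := by
  induction n with
  | zero => simp [legendre_zero]
  | succ r ih =>
    have h := congrArg (Polynomial.eval (1:ℝ)) (lemC r)
    simp [ih] at h
    have hr : ((r:ℝ)+1) ≠ 0 := by positivity
    rcases h with h | h
    · exact absurd h hr
    · linarith

lemma eval_negone (n : ℕ) : (legendreP n).eval (-1) = (-1)^n := by
  induction n with
  | zero => simp [legendre_zero]
  | succ r ih =>
    have h := congrArg (Polynomial.eval (-1:ℝ)) (lemC r)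
    simp [ih] at h
    have hr : ((r:ℝ)+1) ≠ 0 := by positivity
    rcases h with h | h
    · exact absurd h hr
    · rw [pow_succ]
      linarith

open intervalIntegral in
set_option maxHeartbeats 2000000 in
theorem stmt_14 (ω : ℝ) (hω : ω ≠ 0) (j k : ℕ) :
    ∫ x in (-1 : ℝ)..1,
        (legendreP j).eval x * (legendreP k).eval x * Real.cos (2 * ω * x) =
      (1 + (-1 : ℝ) ^ (j + k)) * Real.sin (2 * ω) / (2 * ω) -
      (1 / (2 * ω)) *
        ((∑ l ∈ Finset.range ((j + 1) / 2),
            ((2 * (j - 1 - 2 * l) + 1 : ℕ) : ℝ) *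
              ∫ x in (-1 : ℝ)..1,
                (legendreP (j - 1 - 2 * l)).eval x * (legendreP k).eval x *
                  Real.sin (2 * ω * x)) +
          ∑ l ∈ Finset.range ((k + 1) / 2),
            ((2 * (k - 1 - 2 * l) + 1 : ℕ) : ℝ) *
              ∫ x in (-1 : ℝ)..1,
                (legendreP j).eval x * (legendreP (k - 1 - 2 * l)).eval x *
                  Real.sin (2 * ω * x)) := by
  have hcs : Continuous fun x : ℝ => Real.sin (2*ω*x) :=
    Real.continuous_sin.comp (continuous_const.mul continuous_id)
  have hcc : Continuous fun x : ℝ => Real.cos (2*ω*x) :=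
    Real.continuous_cos.comp (continuous_const.mul continuous_id)
  set q : Polynomial ℝ := legendreP j * legendreP k with hqdef
  -- derivative of the product x ↦ q(x) sin(2ωx)
  have hderiv : ∀ x ∈ Set.uIcc (-1:ℝ) 1,
      HasDerivAt (fun x => q.eval x * Real.sin (2*ω*x))
        ((derivative q).eval x * Real.sin (2*ω*x)
          + q.eval x * (Real.cos (2*ω*x) * (2*ω))) x := by
    intro x _
    have h2 : HasDerivAt (fun x : ℝ => 2*ω*x) (2*ω) x := by
      simpa using (hasDerivAt_id x).const_mul (2*ω)
    exact (q.hasDerivAt x).mul h2.sin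
  have hcq : Continuous fun x : ℝ => q.eval x := q.continuous
  have hcq' : Continuous fun x : ℝ => (derivative q).eval x := (derivative q).continuous
  have hint : IntervalIntegrable
      (fun x => (derivative q).eval x * Real.sin (2*ω*x)
        + q.eval x * (Real.cos (2*ω*x) * (2*ω))) MeasureTheory.volume (-1:ℝ) 1 :=
    ((hcq'.mul hcs).add (hcq.mul (hcc.mul continuous_const))).intervalIntegrable _ _
  have hftc := integral_eq_sub_of_hasDerivAt hderiv hint
  -- boundary values
  have hb : q.eval 1 * Real.sin (2*ω) - q.eval (-1) * Real.sin (2*ω*(-1))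
      = (1 + (-1:ℝ)^(j+k)) * Real.sin (2*ω) := by
    have e1 : q.eval 1 = 1 := by simp [hqdef, eval_one]
    have e2 : q.eval (-1) = (-1:ℝ)^(j+k) := by
      simp [hqdef, eval_negone, pow_add]
    rw [e1, e2, show (2*ω*(-1):ℝ) = -(2*ω) by ring, Real.sin_neg]
    ring_nf
  rw [mul_one] at hftc
  -- split the integral
  have hsplit : (∫ x in (-1:ℝ)..1, ((derivative q).eval x * Real.sin (2*ω*x)
        + q.eval x * (Real.cos (2*ω*x) * (2*ω))))
      = (∫ x in (-1:ℝ)..1, (derivative q).eval x * Real.sin (2*ω*x))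
        + (2*ω) * ∫ x in (-1:ℝ)..1, q.eval x * Real.cos (2*ω*x) := by
    rw [integral_add (f := fun x => (derivative q).eval x * Real.sin (2*ω*x))
      (g := fun x => q.eval x * (Real.cos (2*ω*x) * (2*ω))) ((hcq'.mul hcs).intervalIntegrable _ _)
      ((hcq.mul (hcc.mul continuous_const)).intervalIntegrable _ _)]
    rw [← intervalIntegral.integral_const_mul]
    congr 1
    apply integral_congr
    intro x _
    ring
  -- the integral of q' · sin as the two sums
  have e1 : ∀ x : ℝ, (derivative q).eval x * Real.sin (2*ω*x) =
      (∑ l ∈ Finset.range ((j+1)/2), ((2*(j-1-2*l)+1 : ℕ):ℝ) *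
        ((legendreP (j-1-2*l)).eval x * (legendreP k).eval x * Real.sin (2*ω*x))) +
      (∑ l ∈ Finset.range ((k+1)/2), ((2*(k-1-2*l)+1 : ℕ):ℝ) *
        ((legendreP j).eval x * (legendreP (k-1-2*l)).eval x * Real.sin (2*ω*x))) := by
    intro x
    rw [hqdef, Polynomial.derivative_mul, Dsum j, Dsum k]
    simp only [eval_add, eval_mul, eval_finset_sum, eval_smul, smul_eq_mul, add_mul,
      Finset.sum_mul, Finset.mul_sum]
    congr 1 <;> exact Finset.sum_congr rfl fun l _ => by ring
  have hI1 : (∫ x in (-1:ℝ)..1, (derivative q).eval x * Real.sin (2*ω*x))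
      = (∑ l ∈ Finset.range ((j+1)/2), ((2*(j-1-2*l)+1 : ℕ):ℝ) *
          ∫ x in (-1:ℝ)..1, (legendreP (j-1-2*l)).eval x * (legendreP k).eval x *
            Real.sin (2*ω*x)) +
        (∑ l ∈ Finset.range ((k+1)/2), ((2*(k-1-2*l)+1 : ℕ):ℝ) *
          ∫ x in (-1:ℝ)..1, (legendreP j).eval x * (legendreP (k-1-2*l)).eval x *
            Real.sin (2*ω*x)) := by
    simp only [e1]
    rw [integral_add, integral_finset_sum, integral_finset_sum]
    · simp only [intervalIntegral.integral_const_mul]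
    · intro l _
      exact (continuous_const.mul (((legendreP _).continuous.mul
        (legendreP _).continuous).mul hcs)).intervalIntegrable _ _
    · intro l _
      exact (continuous_const.mul (((legendreP _).continuous.mul
        (legendreP _).continuous).mul hcs)).intervalIntegrable _ _
    · apply Continuous.intervalIntegrable
      apply continuous_finset_sum
      intro l _
      exact continuous_const.mul (((legendreP _).continuous.mul
        (legendreP _).continuous).mul hcs)
    · apply Continuous.intervalIntegrable
      apply continuous_finset_sum
      intro l _
      exact continuous_const.mul (((legendreP _).continuous.mul
        (legendreP _).continuous).mul hcs)
  -- assemble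
  have hq_eval : (∫ x in (-1:ℝ)..1, q.eval x * Real.cos (2*ω*x))
      = ∫ x in (-1:ℝ)..1, (legendreP j).eval x * (legendreP k).eval x * Real.cos (2*ω*x) := by
    apply integral_congr
    intro x _
    simp [hqdef]
  rw [hsplit, hI1, hb] at hftc
  rw [← hq_eval]
  have h2ω : (2*ω : ℝ) ≠ 0 := mul_ne_zero two_ne_zero hω
  push_cast at hftc ⊢
  field_simp
  linear_combination hftc
end
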